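/- arXiv:math/0411652 — 9 statements merged into one kernel-verified Lean document; each statement's English description precedes it below -/
import Mathlib

section
/- Let E₀ > 0, G₀ > 0, L > 0 and T > 0, and let F : ℝ → ℝ be differentiable on [0,T] with F'(t) ≥ (F(t)² + L²)/(2(√E₀ · t + √G₀)²) for all t ∈ [0,T]. Then arctan(F(T)/L) ≥ arctan(F(0)/L) + (L/(2√E₀)) · (1/√G₀ − 1/(√E₀ · T + √G₀)). -/
theorem stmt_5 (E₀ G₀ L T : ℝ) (hE₀ : 0 < E₀) (hG₀ : 0 < G₀) (hL : 0 < L)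
    (hT : 0 < T) (F : ℝ → ℝ)
    (hd : ∀ t ∈ Set.Icc (0:ℝ) T, DifferentiableAt ℝ F t)
    (hF' : ∀ t ∈ Set.Icc (0:ℝ) T,
      deriv F t ≥ (F t ^ 2 + L ^ 2) / (2 * (Real.sqrt E₀ * t + Real.sqrt G₀) ^ 2)) :
    Real.arctan (F T / L) ≥ Real.arctan (F 0 / L)
      + (L / (2 * Real.sqrt E₀))
          * (1 / Real.sqrt G₀ - 1 / (Real.sqrt E₀ * T + Real.sqrt G₀)) := by
  set a := Real.sqrt E₀ with ha_def
  set b := Real.sqrt G₀ with hb_def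
  have ha : 0 < a := Real.sqrt_pos.mpr hE₀
  have hb : 0 < b := Real.sqrt_pos.mpr hG₀
  set g : ℝ → ℝ := fun t => Real.arctan (F t / L) + (L / (2 * a)) * (a * t + b)⁻¹
    with hg_def
  have hs : ∀ t ∈ Set.Icc (0:ℝ) T, 0 < a * t + b := by
    intro t ht
    have := ht.1
    nlinarith
  have hder : ∀ t ∈ Set.Icc (0:ℝ) T,
      HasDerivAt g ((1 / (1 + (F t / L) ^ 2)) * (deriv F t / L)
        + (L / (2 * a)) * (-a / (a * t + b) ^ 2)) t := by
    intro t ht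
    have hFd : HasDerivAt F (deriv F t) t := (hd t ht).hasDerivAt
    have h1 : HasDerivAt (fun t => F t / L) (deriv F t / L) t := hFd.div_const L
    have h2 : HasDerivAt (fun t => Real.arctan (F t / L))
        ((1 / (1 + (F t / L) ^ 2)) * (deriv F t / L)) t :=
      by have := (Real.hasDerivAt_arctan (F t / L)).comp t h1; exact this
    have h3 : HasDerivAt (fun t : ℝ => a * t + b) a t := by
      simpa using ((hasDerivAt_id t).const_mul a).add_const b
    have h4 : HasDerivAt (fun t : ℝ => (a * t + b)⁻¹) (-a / (a * t + b) ^ 2) t :=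
      h3.inv (ne_of_gt (hs t ht))
    exact h2.add (h4.const_mul (L / (2 * a)))
  have hmono : MonotoneOn g (Set.Icc 0 T) := by
    apply monotoneOn_of_deriv_nonneg (convex_Icc 0 T)
    · exact fun t ht => (hder t ht).continuousAt.continuousWithinAt
    · intro t ht
      rw [interior_Icc] at ht
      exact ((hder t (Set.mem_Icc_of_Ioo ht)).differentiableAt).differentiableWithinAt
    · intro t ht
      rw [interior_Icc] at ht
      have ht' : t ∈ Set.Icc (0:ℝ) T := Set.mem_Icc_of_Ioo ht
      rw [(hder t ht').deriv]
      have hst := hs t ht'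
      have hF := hF' t ht'
      have h1 : (1 / (1 + (F t / L) ^ 2)) * (deriv F t / L)
          = L * deriv F t / (F t ^ 2 + L ^ 2) := by
        field_simp
        ring
      rw [h1]
      have hden : 0 < F t ^ 2 + L ^ 2 := by positivity
      have key : L * deriv F t / (F t ^ 2 + L ^ 2) ≥ L / (2 * (a * t + b) ^ 2) := by
        rw [ge_iff_le, div_le_div_iff₀ (by positivity) hden]
        have : deriv F t * (2 * (a * t + b) ^ 2) ≥ F t ^ 2 + L ^ 2 := by
          rw [ge_iff_le, ← div_le_iff₀ (by positivity)]
          exact hF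
        nlinarith
      have h2 : (L / (2 * a)) * (-a / (a * t + b) ^ 2) = -(L / (2 * (a * t + b) ^ 2)) := by
        field_simp
      rw [h2]
      linarith
  have h0 : (0:ℝ) ∈ Set.Icc (0:ℝ) T := Set.mem_Icc.mpr ⟨le_refl 0, hT.le⟩
  have hTm : T ∈ Set.Icc (0:ℝ) T := Set.mem_Icc.mpr ⟨hT.le, le_refl T⟩
  have := hmono h0 hTm hT.le
  simp only [hg_def, mul_zero, zero_add] at this
  have hrw : (L / (2 * a)) * (1 / b - 1 / (a * T + b))
      = (L / (2 * a)) * b⁻¹ - (L / (2 * a)) * (a * T + b)⁻¹ := by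
    rw [one_div, one_div]; ring
  linarith [this]
end

section
/- Let E₀ > 0, G₀ > 0 and L > 0. There is no differentiable function F : [0,∞) → ℝ such that F'(t) ≥ (F(t)² + L²)/(2(√E₀ · t + √G₀)²) for all t ≥ 0 and arctan(F(0)/L) + L/(2√(E₀ G₀)) > π/2. -/
theorem stmt_6 (E₀ G₀ L : ℝ) (hE₀ : 0 < E₀) (hG₀ : 0 < G₀) (hL : 0 < L) :
    ¬ ∃ F : ℝ → ℝ,
      (∀ t ≥ (0:ℝ), DifferentiableAt ℝ F t) ∧
      (∀ t ≥ (0:ℝ), deriv F t ≥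
        (F t ^ 2 + L ^ 2) / (2 * (Real.sqrt E₀ * t + Real.sqrt G₀) ^ 2)) ∧
      Real.arctan (F 0 / L) + L / (2 * Real.sqrt (E₀ * G₀)) > Real.pi / 2 := by
  rintro ⟨F, hdiff, hineq, hbig⟩
  set a := Real.sqrt E₀ with ha'
  set b := Real.sqrt G₀ with hb'
  have ha : 0 < a := Real.sqrt_pos.2 hE₀
  have hb : 0 < b := Real.sqrt_pos.2 hG₀
  have hab : Real.sqrt (E₀ * G₀) = a * b := Real.sqrt_mul hE₀.le _
  set ψ : ℝ → ℝ := fun t => Real.arctan (F t / L) + (L / (2 * a)) * (a * t + b)⁻¹ with hψ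
  have hpos : ∀ t ≥ (0:ℝ), 0 < a * t + b := fun t ht => by positivity
  have hD : ∀ t ≥ (0:ℝ), HasDerivAt ψ
      ((1 / (1 + (F t / L) ^ 2)) * (deriv F t / L)
        + (L / (2 * a)) * (-a / (a * t + b) ^ 2)) t := by
    intro t ht
    have h1 : HasDerivAt (fun s => F s / L) (deriv F t / L) t :=
      ((hdiff t ht).hasDerivAt).div_const L
    have h2 : HasDerivAt (fun s => Real.arctan (F s / L))
        ((1 / (1 + (F t / L) ^ 2)) * (deriv F t / L)) t :=
      by have := (Real.hasDerivAt_arctan (F t / L)).comp t h1; exact this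
    have h3 : HasDerivAt (fun s => a * s + b) a t := by
      simpa using ((hasDerivAt_id t).const_mul a).add_const b
    have h4 : HasDerivAt (fun s => (a * s + b)⁻¹) (-a / (a * t + b) ^ 2) t :=
      h3.inv (hpos t ht).ne'
    exact h2.add (h4.const_mul _)
  have hd0 : ∀ t ≥ (0:ℝ), 0 ≤ (1 / (1 + (F t / L) ^ 2)) * (deriv F t / L)
      + (L / (2 * a)) * (-a / (a * t + b) ^ 2) := by
    intro t ht
    have hP : (0:ℝ) < F t ^ 2 + L ^ 2 := by positivity
    have hQ : (0:ℝ) < 2 * (a * t + b) ^ 2 := by positivity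
    have h1 : (1 / (1 + (F t / L) ^ 2)) * (deriv F t / L)
        = deriv F t * L / (F t ^ 2 + L ^ 2) := by
      field_simp
      ring
    have h2 : (L / (2 * a)) * (-a / (a * t + b) ^ 2) = -(L / (2 * (a * t + b) ^ 2)) := by
      field_simp
    rw [h1, h2]
    have hkey := hineq t ht
    rw [ge_iff_le, div_le_iff₀ hQ] at hkey
    rw [← sub_eq_add_neg, sub_nonneg, div_le_div_iff₀ hQ hP]
    nlinarith [hL.le, hQ.le]
  have hmono : MonotoneOn ψ (Set.Ici 0) := by
    apply monotoneOn_of_deriv_nonneg (convex_Ici 0)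
    · exact fun t ht => ((hD t ht).differentiableAt).continuousAt.continuousWithinAt
    · intro t ht
      rw [interior_Ici] at ht
      exact ((hD t ht.le).differentiableAt).differentiableWithinAt
    · intro t ht
      rw [interior_Ici] at ht
      rw [(hD t ht.le).deriv]
      exact hd0 t ht.le
  have hψ0 : Real.pi / 2 < ψ 0 := by
    have : ψ 0 = Real.arctan (F 0 / L) + (L / (2 * a)) * b⁻¹ := by
      simp [hψ]
    rw [this]
    have heq : (L / (2 * a)) * b⁻¹ = L / (2 * Real.sqrt (E₀ * G₀)) := by
      rw [hab, ← div_eq_mul_inv, div_div, mul_assoc]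
    rw [heq]
    linarith [hbig]
  set δ := ψ 0 - Real.pi / 2 with hδ'
  have hδ : 0 < δ := by rw [hδ']; linarith
  set T := max 1 (L / (2 * a * a * δ)) with hT'
  have hT0 : (0:ℝ) ≤ T := le_trans zero_le_one (le_max_left _ _)
  have hTL : L / (2 * a * a * δ) ≤ T := le_max_right _ _
  have hlt : ψ T < ψ 0 := by
    have harctan : Real.arctan (F T / L) < Real.pi / 2 := Real.arctan_lt_pi_div_two _
    have hterm : (L / (2 * a)) * (a * T + b)⁻¹ < δ := by
      have hpT : 0 < a * T + b := hpos T hT0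
      have hT2 : L / (2 * a * a * δ) ≤ T := hTL
      rw [div_le_iff₀ (by positivity)] at hT2
      have key : L < 2 * a * (a * T + b) * δ := by
        nlinarith [mul_pos (mul_pos ha hδ) hb]
      calc (L / (2 * a)) * (a * T + b)⁻¹ = L / (2 * a * (a * T + b)) := by
            rw [← div_eq_mul_inv, div_div]
        _ < δ := by rw [div_lt_iff₀ (by positivity)]; linarith
    have : ψ T = Real.arctan (F T / L) + (L / (2 * a)) * (a * T + b)⁻¹ := rfl
    rw [this]
    have : ψ 0 = Real.pi / 2 + δ := by rw [hδ']; ring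
    rw [this]
    linarith
  have := hmono (Set.mem_Ici.2 le_rfl) (Set.mem_Ici.2 hT0) hT0
  linarith
end

section
/- Let E₀ > 0, G₀ > 0, L > 0 and β > 1. There is no differentiable function F : [0,∞) → ℝ such that F'(t) ≥ (F(t)² + L²)/(2 · G₀^{1−β/2} · (√E₀ · t + √G₀)^β) for all t ≥ 0 and arctan(F(0)/L) + L/(2(β−1)√(E₀ G₀)) > π/2. -/
open Real Filter

theorem stmt_7 (E₀ G₀ L β : ℝ) (hE₀ : 0 < E₀) (hG₀ : 0 < G₀) (hL : 0 < L)
    (hβ : 1 < β) :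
    ¬ ∃ F : ℝ → ℝ,
      (∀ t ≥ (0:ℝ), DifferentiableAt ℝ F t) ∧
      (∀ t ≥ (0:ℝ), deriv F t ≥
        (F t ^ 2 + L ^ 2) /
          (2 * G₀ ^ (1 - β / 2) * (Real.sqrt E₀ * t + Real.sqrt G₀) ^ β)) ∧
      Real.arctan (F 0 / L) + L / (2 * (β - 1) * Real.sqrt (E₀ * G₀)) > Real.pi / 2 := by
  rintro ⟨F, hdiff, hineq, hinit⟩
  have hβ1 : 0 < β - 1 := by linarith
  set a := Real.sqrt E₀ with ha_def
  set b := Real.sqrt G₀ with hb_def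
  have ha : 0 < a := Real.sqrt_pos.mpr hE₀
  have hb : 0 < b := Real.sqrt_pos.mpr hG₀
  set P := G₀ ^ (1 - β/2) with hP_def
  have hP : (0:ℝ) < P := Real.rpow_pos_of_pos hG₀ _
  set c := L / (2*(β-1)*a*P) with hc_def
  have hc : 0 < c := div_pos hL (by positivity)
  set g : ℝ → ℝ := fun t => Real.arctan (F t / L) + c * (a*t+b)^(1-β) with hg_def
  have hbase : ∀ t ≥ (0:ℝ), 0 < a*t+b := fun t ht => by nlinarith
  -- derivative of g
  have hgd : ∀ t ≥ (0:ℝ), HasDerivAt g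
      ((1/(1+(F t/L)^2)) * (deriv F t / L) + c * ((1-β)*(a*t+b)^(1-β-1) * a)) t := by
    intro t ht
    have h1 : HasDerivAt (fun t => F t / L) (deriv F t / L) t :=
      ((hdiff t ht).hasDerivAt).div_const L
    have h2 : HasDerivAt (fun t => Real.arctan (F t / L))
        ((1/(1+(F t/L)^2)) * (deriv F t / L)) t :=
      by have := (Real.hasDerivAt_arctan (F t / L)).comp t h1; exact this
    have h3 : HasDerivAt (fun t : ℝ => a*t+b) a t := by
      simpa using ((hasDerivAt_id t).const_mul a).add_const b
    have h4 : HasDerivAt (fun t => (a*t+b)^(1-β))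
        ((1-β)*(a*t+b)^(1-β-1) * a) t :=
      by have := (Real.hasDerivAt_rpow_const (p := 1-β) (Or.inl (hbase t ht).ne')).comp t h3; exact this
    exact h2.add (h4.const_mul c)
  -- derivative is nonnegative
  have hDnn : ∀ t ≥ (0:ℝ), 0 ≤ (1/(1+(F t/L)^2)) * (deriv F t / L)
      + c * ((1-β)*(a*t+b)^(1-β-1) * a) := by
    intro t ht
    have hX : (0:ℝ) < (a*t+b)^β := Real.rpow_pos_of_pos (hbase t ht) _
    have hden : (0:ℝ) < F t^2 + L^2 := by positivity
    have hden2 : (1:ℝ) + (F t/L)^2 > 0 := by positivity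
    have e1 : (1/(1+(F t/L)^2)) * (deriv F t / L) = (L/(F t^2 + L^2)) * deriv F t := by
      field_simp
      ring
    have e2 : c * ((1-β)*(a*t+b)^(1-β-1) * a) = -((L/(2*P)) * ((a*t+b)^β)⁻¹) := by
      have hrw : (a*t+b)^(1-β-1) = ((a*t+b)^β)⁻¹ := by
        rw [show (1-β-1 : ℝ) = -β by ring, Real.rpow_neg (hbase t ht).le]
      rw [hrw, hc_def]
      field_simp
      ring
    rw [e1, e2]
    have h5 : (L/(F t^2+L^2)) * ((F t^2+L^2)/(2*P*(a*t+b)^β)) ≤ (L/(F t^2+L^2)) * deriv F t :=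
      mul_le_mul_of_nonneg_left (hineq t ht) (by positivity)
    have h6 : (L/(F t^2+L^2)) * ((F t^2+L^2)/(2*P*(a*t+b)^β)) = (L/(2*P)) * ((a*t+b)^β)⁻¹ := by
      field_simp
    linarith [h6 ▸ h5]
  -- monotone on Ici 0
  have hmono : MonotoneOn g (Set.Ici (0:ℝ)) := by
    apply monotoneOn_of_deriv_nonneg (convex_Ici 0)
    · intro t ht
      exact (hgd t ht).differentiableAt.continuousAt.continuousWithinAt
    · intro t ht
      rw [interior_Ici] at ht
      exact (hgd t (le_of_lt ht)).differentiableAt.differentiableWithinAt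
    · intro t ht
      rw [interior_Ici] at ht
      rw [(hgd t (le_of_lt ht)).deriv]
      exact hDnn t (le_of_lt ht)
  -- value of g at 0
  have hG2 : G₀ = b ^ (2:ℝ) := by
    rw [Real.rpow_two, hb_def, Real.sq_sqrt hG₀.le]
  have hPb : P = b ^ ((2:ℝ)-β) := by
    rw [hP_def, hG2, ← Real.rpow_mul hb.le, show (2:ℝ)*(1-β/2) = 2-β by ring]
  have hab : Real.sqrt (E₀ * G₀) = a * b := Real.sqrt_mul hE₀.le G₀
  have key : b ^ (1-β) * b = b ^ ((2:ℝ)-β) := by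
    have h := Real.rpow_add hb (1-β) 1
    rw [show (1-β) + 1 = (2:ℝ)-β by ring] at h
    rw [h, Real.rpow_one]
  have hcb : c * b^(1-β) = L / (2*(β-1)*Real.sqrt (E₀*G₀)) := by
    rw [hab, hc_def, hPb]
    rw [div_mul_eq_mul_div, div_eq_div_iff (by positivity) (by positivity), ← key]
    ring
  have hg0 : g 0 = Real.arctan (F 0 / L) + L / (2*(β-1)*Real.sqrt (E₀*G₀)) := by
    simp only [hg_def, mul_zero, zero_add]
    rw [hcb]
  -- find a large time T
  set ε := g 0 - Real.pi/2 with hε_def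
  have hε : 0 < ε := by rw [hε_def, hg0]; linarith
  have h1 : Tendsto (fun t:ℝ => a*t+b) atTop atTop :=
    tendsto_atTop_add_const_right atTop b (tendsto_id.const_mul_atTop ha)
  have h2 : Tendsto (fun x:ℝ => x ^ (-(β-1))) atTop (nhds 0) :=
    tendsto_rpow_neg_atTop hβ1
  have htend : Tendsto (fun t : ℝ => c * (a*t+b)^(1-β)) atTop (nhds 0) := by
    have := ((h2.comp h1).const_mul c)
    simpa [Function.comp, show -(β-1) = 1-β by ring] using this
  have hev : ∀ᶠ t in atTop, c * (a*t+b)^(1-β) < ε :=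
    htend.eventually_lt_const hε
  obtain ⟨T, hT⟩ := (hev.and (eventually_ge_atTop (0:ℝ))).exists
  have hmle : g 0 ≤ g T := hmono Set.self_mem_Ici (Set.mem_Ici.mpr hT.2) hT.2
  have harc : Real.arctan (F T / L) < Real.pi/2 := Real.arctan_lt_pi_div_two _
  have : g T < g 0 := by
    have h3 : g T = Real.arctan (F T / L) + c * (a*T+b)^(1-β) := rfl
    rw [h3]
    have := hT.1
    rw [hε_def] at this
    linarith
  linarith
end

section
/- Let n ≥ 1 be an integer, γ a real number with 1 < γ ≤ 1 + 2/n, and let E₀ > 0, C > 0, M ≥ 0 be constants. Suppose G, F, E_p : [0,∞) → ℝ are functions such that: G is differentiable with G'(t) = F(t) and G(t) > 0 for all t ≥ 0; F is differentiable with F'(t) ≥ (F(t)² + M²)/(2G(t)) + n(γ−1)E_p(t) for all t ≥ 0; E_p(t) ≥ C / G(t)^{(γ−1)n/2} for all t ≥ 0; and F(t)² ≤ 4 E₀ G(t) for all t ≥ 0. Set L = (2n(γ−1) C · G(0)^{1−(γ−1)n/2} + M²)^{1/2}. If arctan(F(0)/L) + L/(2√(E₀ G(0))) > π/2, then a contradiction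 follows; that is, no such collection of functions defined on all of [0,∞) exists. -/
open Real Set

set_option maxHeartbeats 1600000 in
lemma aux_blowup (n : ℕ) (hn : 1 ≤ n) (γ : ℝ) (hγ1 : 1 < γ) (hγ2 : γ ≤ 1 + 2 / n)
    (E₀ C M : ℝ) (hE₀ : 0 < E₀) (hC : 0 < C) (hM : 0 ≤ M)
    (G F Ep : ℝ → ℝ)
    (hGd : ∀ t ≥ (0:ℝ), DifferentiableAt ℝ G t)
    (hG' : ∀ t ≥ (0:ℝ), deriv G t = F t)
    (hGpos : ∀ t ≥ (0:ℝ), 0 < G t)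
    (hFd : ∀ t ≥ (0:ℝ), DifferentiableAt ℝ F t)
    (hF' : ∀ t ≥ (0:ℝ), deriv F t ≥ (F t ^ 2 + M ^ 2) / (2 * G t) + n * (γ - 1) * Ep t)
    (hEp : ∀ t ≥ (0:ℝ), Ep t ≥ C / G t ^ ((γ - 1) * n / 2))
    (hF2 : ∀ t ≥ (0:ℝ), F t ^ 2 ≤ 4 * E₀ * G t)
    (s : ℝ) (hs : 0 ≤ s) (hFs : 0 ≤ F s)
    (Ls : ℝ)
    (hLs : Ls = Real.sqrt (2 * n * (γ - 1) * C * G s ^ (1 - (γ - 1) * n / 2) + M ^ 2))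
    (hbig : Real.arctan (F s / Ls) + Ls / (2 * Real.sqrt (E₀ * G s)) > Real.pi / 2) :
    False := by
  have hn1 : (1:ℝ) ≤ n := by exact_mod_cast hn
  have hnp : (0:ℝ) < n := by linarith
  have hγ0 : (0:ℝ) < γ - 1 := by linarith
  have hk : (0:ℝ) < n * (γ - 1) := by positivity
  set α : ℝ := (γ - 1) * n / 2 with hαdef
  have hα0 : 0 < α := by positivity
  have hα1 : α ≤ 1 := by
    have h1 : γ - 1 ≤ 2 / n := by linarith
    have h2 : (γ - 1) * n ≤ (2 / n) * n := mul_le_mul_of_nonneg_right h1 hnp.le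
    have h3 : (2 / (n:ℝ)) * n = 2 := by field_simp
    rw [hαdef]; nlinarith
  have hGs : 0 < G s := hGpos s hs
  have hLs2pos : 0 < 2 * n * (γ - 1) * C * G s ^ (1 - α) + M ^ 2 := by
    have := Real.rpow_pos_of_pos hGs (1 - α)
    positivity
  have hLpos : 0 < Ls := by rw [hLs]; exact Real.sqrt_pos.mpr hLs2pos
  have hLsq : Ls ^ 2 = 2 * n * (γ - 1) * C * G s ^ (1 - α) + M ^ 2 := by
    rw [hLs, Real.sq_sqrt hLs2pos.le]
  -- F has positive derivative at all t ≥ 0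
  have hFderiv_pos : ∀ t ≥ (0:ℝ), 0 < deriv F t := by
    intro t ht
    have hg := hGpos t ht
    have h1 : 0 < C / G t ^ α := div_pos hC (Real.rpow_pos_of_pos hg α)
    have h2 : (0:ℝ) ≤ (F t ^ 2 + M ^ 2) / (2 * G t) := by positivity
    have h3 := hEp t ht
    have h4 := hF' t ht
    nlinarith
  -- F is monotone on Ici s
  have hFmono : MonotoneOn F (Ici s) := by
    apply monotoneOn_of_deriv_nonneg (convex_Ici s)
    · exact fun t ht => (hFd t (hs.trans ht)).continuousAt.continuousWithinAt
    · intro t ht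
      rw [interior_Ici] at ht
      exact ((hFd t (hs.trans ht.le)).differentiableWithinAt)
    · intro t ht
      rw [interior_Ici] at ht
      exact (hFderiv_pos t (hs.trans ht.le)).le
  have hFnn : ∀ t ∈ Ici s, 0 ≤ F t := fun t ht => hFs.trans (hFmono self_mem_Ici ht ht)
  -- G is monotone on Ici s
  have hGmono : MonotoneOn G (Ici s) := by
    apply monotoneOn_of_deriv_nonneg (convex_Ici s)
    · exact fun t ht => (hGd t (hs.trans ht)).continuousAt.continuousWithinAt
    · intro t ht
      rw [interior_Ici] at ht
      exact ((hGd t (hs.trans ht.le)).differentiableWithinAt)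
    · intro t ht
      rw [interior_Ici] at ht
      rw [hG' t (hs.trans ht.le)]
      exact hFnn t (mem_Ici.mpr (le_of_lt ht))
  have hGge : ∀ t ∈ Ici s, G s ≤ G t := fun t ht => hGmono self_mem_Ici ht ht
  set a : ℝ := Real.sqrt (G s) with hadef
  set b : ℝ := Real.sqrt E₀ with hbdef
  have ha : 0 < a := Real.sqrt_pos.mpr hGs
  have hb : 0 < b := Real.sqrt_pos.mpr hE₀
  have hb2 : b ^ 2 = E₀ := Real.sq_sqrt hE₀.le
  -- bound F t ≤ 2 b √(G t)
  have hFle : ∀ t ≥ (0:ℝ), F t ≤ 2 * b * Real.sqrt (G t) := by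
    intro t ht
    have hg := hGpos t ht
    have h1 : F t ≤ |F t| := le_abs_self _
    have h2 : |F t| = Real.sqrt (F t ^ 2) := (Real.sqrt_sq_eq_abs _).symm
    have h3 : Real.sqrt (F t ^ 2) ≤ Real.sqrt (4 * E₀ * G t) := Real.sqrt_le_sqrt (hF2 t ht)
    have h4 : Real.sqrt (4 * E₀ * G t) = 2 * b * Real.sqrt (G t) := by
      rw [show (4:ℝ) * E₀ * G t = (2 * b * Real.sqrt (G t)) ^ 2 by
        rw [mul_pow, mul_pow, hb2, Real.sq_sqrt hg.le]; ring]
      exact Real.sqrt_sq (by positivity)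
    linarith [h2 ▸ h1, h4 ▸ h3]
  -- q = √(G t) - b t is antitone on Ici s
  have hq : ∀ t ≥ (0:ℝ), HasDerivAt (fun t => Real.sqrt (G t) - b * t)
      (F t / (2 * Real.sqrt (G t)) - b) t := by
    intro t ht
    have h1 : HasDerivAt (fun t => Real.sqrt (G t)) (deriv G t / (2 * Real.sqrt (G t))) t :=
      (hGd t ht).hasDerivAt.sqrt (ne_of_gt (hGpos t ht))
    rw [hG' t ht] at h1
    have h2 := h1.sub ((hasDerivAt_id' t).const_mul b)
    simp only [mul_one] at h2
    exact h2
  have hqanti : AntitoneOn (fun t => Real.sqrt (G t) - b * t) (Ici s) := by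
    apply antitoneOn_of_deriv_nonpos (convex_Ici s)
    · exact fun t ht => (hq t (hs.trans ht)).continuousAt.continuousWithinAt
    · intro t ht
      rw [interior_Ici] at ht
      exact (hq t (hs.trans ht.le)).differentiableAt.differentiableWithinAt
    · intro t ht
      rw [interior_Ici] at ht
      have ht' : (0:ℝ) ≤ t := hs.trans ht.le
      rw [(hq t ht').deriv]
      have hg := hGpos t ht'
      have := hFle t ht'
      have hrt : 0 < Real.sqrt (G t) := Real.sqrt_pos.mpr hg
      rw [sub_nonpos, div_le_iff₀ (by positivity)]
      nlinarith
  -- hence G t ≤ (a + b (t - s))^2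
  have hGP : ∀ t ∈ Ici s, G t ≤ (a + b * (t - s)) ^ 2 := by
    intro t ht
    have h1 : Real.sqrt (G t) - b * t ≤ Real.sqrt (G s) - b * s := hqanti self_mem_Ici ht ht
    have h2 : Real.sqrt (G t) ≤ a + b * (t - s) := by rw [hadef]; linarith
    calc G t = Real.sqrt (G t) ^ 2 := (Real.sq_sqrt (hGpos t (hs.trans ht)).le).symm
    _ ≤ (a + b * (t - s)) ^ 2 := by
        have h0 : 0 ≤ Real.sqrt (G t) := Real.sqrt_nonneg _
        nlinarith
  have hPpos : ∀ t ∈ Ici s, 0 < a + b * (t - s) := by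
    intro t ht
    have : 0 ≤ t - s := sub_nonneg.mpr ht
    nlinarith
  -- the key functional Ψ
  have hΨd : ∀ t ∈ Ici s, HasDerivAt
      (fun t => Real.arctan (F t / Ls) + Ls / (2*b) * (a + b*(t-s))⁻¹)
      (1/(1+(F t/Ls)^2) * (deriv F t / Ls) + Ls/(2*b) * (-b/(a+b*(t-s))^2)) t := by
    intro t ht
    have ht0 : (0:ℝ) ≤ t := hs.trans ht
    have h1 : HasDerivAt (fun t => F t / Ls) (deriv F t / Ls) t :=
      (hFd t ht0).hasDerivAt.div_const Ls
    have h2 := h1.arctan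
    have hP : HasDerivAt (fun t => a + b*(t-s)) b t := by
      simpa using (((hasDerivAt_id t).sub_const s).const_mul b).const_add a
    have h3 : HasDerivAt (fun t => (a + b*(t-s))⁻¹) (-b/(a+b*(t-s))^2) t := by
      exact hP.inv (ne_of_gt (hPpos t ht))
    exact h2.add (h3.const_mul (Ls/(2*b)))
  have hkey : ∀ t ∈ Ici s,
      0 ≤ 1/(1+(F t/Ls)^2) * (deriv F t / Ls) + Ls/(2*b) * (-b/(a+b*(t-s))^2) := by
    intro t ht
    have ht0 : (0:ℝ) ≤ t := hs.trans ht
    have hg := hGpos t ht0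
    have hp := hPpos t ht
    have hu' := hFderiv_pos t ht0
    -- deriv F t ≥ (F t ^2 + Ls^2) / (2 G t)
    have h5 : (F t ^ 2 + Ls ^ 2) / (2 * G t) ≤ deriv F t := by
      have e1 : G t ^ (1-α) = G t / G t ^ α := by rw [Real.rpow_sub hg, Real.rpow_one]
      have e2 : G s ^ (1-α) ≤ G t ^ (1-α) :=
        Real.rpow_le_rpow hGs.le (hGge t ht) (by linarith)
      have hgα : 0 < G t ^ α := Real.rpow_pos_of_pos hg α
      have e3 : C / G t ^ α = C * G t ^ (1-α) / G t := by
        rw [e1]; field_simp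
      have e4 := hEp t ht0
      have e5 : C * G s ^ (1-α) / G t ≤ Ep t := by
        rw [e3] at e4
        have : C * G s ^ (1-α) / G t ≤ C * G t ^ (1-α) / G t := by gcongr
        linarith
      have e6 := mul_le_mul_of_nonneg_left e5 hk.le
      have e7 := hF' t ht0
      have e8 : (F t ^ 2 + M ^ 2) / (2 * G t) + (n:ℝ)*(γ-1) * (C * G s ^ (1-α) / G t)
          = (F t ^ 2 + Ls ^ 2) / (2 * G t) := by
        rw [hLsq]; field_simp; ring
      linarith
    have h5' : F t ^ 2 + Ls ^ 2 ≤ 2 * G t * deriv F t := by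
      rw [div_le_iff₀ (by positivity)] at h5
      linarith
    have eA : 1/(1+(F t/Ls)^2) * (deriv F t / Ls) = Ls * deriv F t / (Ls^2 + F t ^2) := by
      field_simp
    have eB : Ls/(2*b) * (-b/(a+b*(t-s))^2) = -(Ls / (2*(a+b*(t-s))^2)) := by
      field_simp
    rw [eA, eB]
    have hQ : Ls / (2*(a+b*(t-s))^2) ≤ Ls * deriv F t / (Ls^2 + F t ^2) := by
      rw [div_le_div_iff₀ (by positivity) (by positivity)]
      have hGp2 := hGP t ht
      nlinarith [mul_nonneg (mul_nonneg hLpos.le (sub_nonneg.mpr hGp2)) hu'.le,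
        mul_nonneg hLpos.le (sub_nonneg.mpr h5')]
    linarith
  have hΨmono : MonotoneOn
      (fun t => Real.arctan (F t / Ls) + Ls / (2*b) * (a + b*(t-s))⁻¹) (Ici s) := by
    apply monotoneOn_of_deriv_nonneg (convex_Ici s)
    · exact fun t ht => (hΨd t ht).continuousAt.continuousWithinAt
    · intro t ht
      rw [interior_Ici] at ht
      exact (hΨd t (mem_Ici.mpr (le_of_lt ht))).differentiableAt.differentiableWithinAt
    · intro t ht
      rw [interior_Ici] at ht
      rw [(hΨd t (mem_Ici.mpr (le_of_lt ht))).deriv]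
      exact hkey t (mem_Ici.mpr (le_of_lt ht))
  -- conclusion
  set ε : ℝ := Real.arctan (F s / Ls) + Ls / (2 * Real.sqrt (E₀ * G s)) - π/2 with hεdef
  have hε : 0 < ε := by
    have := hbig
    rw [hεdef]; linarith
  set t₀ : ℝ := s + Ls/(2*b^2*ε) with ht₀def
  have ht₀mem : t₀ ∈ Ici s := by
    have : 0 ≤ Ls/(2*b^2*ε) := by positivity
    simp only [mem_Ici, ht₀def]; linarith
  have hmono' : Real.arctan (F s/Ls) + Ls/(2*b)*(a+b*(s-s))⁻¹
      ≤ Real.arctan (F t₀/Ls) + Ls/(2*b)*(a+b*(t₀-s))⁻¹ :=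
    hΨmono self_mem_Ici ht₀mem ht₀mem
  have hΨs : Real.arctan (F s/Ls) + Ls/(2*b)*(a+b*(s-s))⁻¹ = π/2 + ε := by
    have hsq : Real.sqrt (E₀ * G s) = b * a := Real.sqrt_mul hE₀.le _
    rw [hεdef, hsq]
    have : a + b*(s-s) = a := by ring
    rw [this]
    field_simp
    ring
  have hbound : Ls/(2*b) * (a+b*(t₀-s))⁻¹ ≤ ε := by
    have h1 : Ls/(2*b*ε) ≤ a + b*(t₀-s) := by
      have e : b*(t₀-s) = Ls/(2*b*ε) := by
        rw [ht₀def]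
        field_simp
        ring
      rw [e]; linarith
    have h2 : (a+b*(t₀-s))⁻¹ ≤ (Ls/(2*b*ε))⁻¹ :=
      inv_anti₀ (by positivity) h1
    have h3 : Ls/(2*b) * (Ls/(2*b*ε))⁻¹ = ε := by
      field_simp
    calc Ls/(2*b) * (a+b*(t₀-s))⁻¹ ≤ Ls/(2*b) * (Ls/(2*b*ε))⁻¹ :=
          mul_le_mul_of_nonneg_left h2 (by positivity)
    _ = ε := h3
  have harc := Real.arctan_lt_pi_div_two (F t₀ / Ls)
  linarith




set_option maxHeartbeats 1600000 in
theorem stmt_8 (n : ℕ) (hn : 1 ≤ n) (γ : ℝ) (hγ1 : 1 < γ) (hγ2 : γ ≤ 1 + 2 / n)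
    (E₀ C M : ℝ) (hE₀ : 0 < E₀) (hC : 0 < C) (hM : 0 ≤ M)
    (G F Ep : ℝ → ℝ)
    (hGd : ∀ t ≥ (0:ℝ), DifferentiableAt ℝ G t)
    (hG' : ∀ t ≥ (0:ℝ), deriv G t = F t)
    (hGpos : ∀ t ≥ (0:ℝ), 0 < G t)
    (hFd : ∀ t ≥ (0:ℝ), DifferentiableAt ℝ F t)
    (hF' : ∀ t ≥ (0:ℝ), deriv F t ≥
      (F t ^ 2 + M ^ 2) / (2 * G t) + n * (γ - 1) * Ep t)
    (hEp : ∀ t ≥ (0:ℝ), Ep t ≥ C / G t ^ ((γ - 1) * n / 2))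
    (hF2 : ∀ t ≥ (0:ℝ), F t ^ 2 ≤ 4 * E₀ * G t)
    (L : ℝ)
    (hL : L = Real.sqrt (2 * n * (γ - 1) * C * G 0 ^ (1 - (γ - 1) * n / 2) + M ^ 2))
    (hcond : Real.arctan (F 0 / L) + L / (2 * Real.sqrt (E₀ * G 0)) > Real.pi / 2) :
    False := by
  have hn1 : (1:ℝ) ≤ n := by exact_mod_cast hn
  have hnp : (0:ℝ) < n := by linarith
  have hγ0 : (0:ℝ) < γ - 1 := by linarith
  have hk : (0:ℝ) < n * (γ - 1) := by positivity
  have hG0 : 0 < G 0 := hGpos 0 le_rfl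
  set α : ℝ := (γ - 1) * n / 2 with hαdef
  have hα0 : 0 < α := by positivity
  have hα1 : α ≤ 1 := by
    have h1 : γ - 1 ≤ 2 / n := by linarith
    have h2 : (γ - 1) * n ≤ (2 / n) * n := mul_le_mul_of_nonneg_right h1 hnp.le
    have h3 : (2 / (n:ℝ)) * n = 2 := by field_simp
    rw [hαdef]; nlinarith
  have hL2pos : 0 < 2 * n * (γ - 1) * C * G 0 ^ (1 - α) + M ^ 2 := by
    have := Real.rpow_pos_of_pos hG0 (1 - α)
    positivity
  have hLpos : 0 < L := by rw [hL]; exact Real.sqrt_pos.mpr hL2pos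
  rcases le_or_gt 0 (F 0) with hF0 | hF0
  · exact aux_blowup n hn γ hγ1 hγ2 E₀ C M hE₀ hC hM G F Ep hGd hG' hGpos hFd hF' hEp hF2
      0 le_rfl hF0 L hL hcond
  · -- F 0 < 0
    have harcneg : Real.arctan (F 0 / L) < 0 := by
      have h1 : F 0 / L < 0 := div_neg_of_neg_of_pos hF0 hLpos
      have := Real.arctan_strictMono h1
      rwa [Real.arctan_zero] at this
    have hπ : π / 2 < L / (2 * Real.sqrt (E₀ * G 0)) := by
      have := hcond; linarith
    set c : ℝ := n * (γ - 1) * C / G 0 ^ α with hcdef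
    have hgα0 : 0 < G 0 ^ α := Real.rpow_pos_of_pos hG0 α
    have hc : 0 < c := by rw [hcdef]; positivity
    set T : ℝ := (0 - F 0) / c with hTdef
    have hT : 0 < T := by rw [hTdef]; apply div_pos (by linarith) hc
    have hFc : ∀ t ≥ (0:ℝ), HasDerivAt (fun t => F t - c * t) (deriv F t - c) t := by
      intro t ht
      have h2 := (hFd t ht).hasDerivAt.sub ((hasDerivAt_id' t).const_mul c)
      simp only [mul_one] at h2
      exact h2
    have hex : ∃ t ∈ Icc (0:ℝ) T, 0 ≤ F t := by
      by_contra hcon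
      push_neg at hcon
      have hGanti : AntitoneOn G (Icc 0 T) := by
        apply antitoneOn_of_deriv_nonpos (convex_Icc 0 T)
        · exact fun t ht => (hGd t ht.1).continuousAt.continuousWithinAt
        · intro t ht; rw [interior_Icc] at ht
          exact (hGd t ht.1.le).differentiableWithinAt
        · intro t ht; rw [interior_Icc] at ht
          rw [hG' t ht.1.le]
          exact (hcon t ⟨ht.1.le, ht.2.le⟩).le
      have hmono : MonotoneOn (fun t => F t - c * t) (Icc 0 T) := by
        apply monotoneOn_of_deriv_nonneg (convex_Icc 0 T)
        · exact fun t ht => (hFc t ht.1).continuousAt.continuousWithinAt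
        · intro t ht; rw [interior_Icc] at ht
          exact (hFc t ht.1.le).differentiableAt.differentiableWithinAt
        · intro t ht; rw [interior_Icc] at ht
          rw [(hFc t ht.1.le).deriv]
          have ht0 : (0:ℝ) ≤ t := ht.1.le
          have hgt := hGpos t ht0
          have hGle : G t ≤ G 0 := hGanti ⟨le_rfl, hT.le⟩ ⟨ht.1.le, ht.2.le⟩ ht.1.le
          have hgtα : 0 < G t ^ α := Real.rpow_pos_of_pos hgt α
          have hαmono : G t ^ α ≤ G 0 ^ α := Real.rpow_le_rpow hgt.le hGle hα0.le
          have h1 : C / G 0 ^ α ≤ C / G t ^ α := by gcongr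
          have h2 := hEp t ht0
          have h3 := hF' t ht0
          have h4 : (0:ℝ) ≤ (F t ^ 2 + M ^ 2) / (2 * G t) := by positivity
          have h5 := mul_le_mul_of_nonneg_left (h1.trans h2) hk.le
          rw [hcdef]
          have h6 : (n:ℝ) * (γ - 1) * (C / G 0 ^ α) = n * (γ - 1) * C / G 0 ^ α := by ring
          linarith [h6 ▸ h5]
      have hFT : F 0 - c * 0 ≤ F T - c * T :=
        hmono ⟨le_rfl, hT.le⟩ ⟨hT.le, le_rfl⟩ hT.le
      have hcT : c * T = -F 0 := by
        rw [hTdef]; field_simp; ring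
      have := hcon T ⟨hT.le, le_rfl⟩
      linarith
    obtain ⟨w, hw, hwF⟩ := hex
    set S : Set ℝ := Icc 0 T ∩ F ⁻¹' (Ici 0) with hSdef
    have hSclosed : IsClosed S := by
      apply ContinuousOn.preimage_isClosed_of_isClosed ?_ isClosed_Icc isClosed_Ici
      exact fun t ht => (hFd t ht.1).continuousAt.continuousWithinAt
    have hSne : S.Nonempty := ⟨w, hw, hwF⟩
    have hSbdd : BddBelow S := ⟨0, fun x hx => hx.1.1⟩
    set t₁ := sInf S with ht₁def
    have ht₁S : t₁ ∈ S := hSclosed.csInf_mem hSne hSbdd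
    have ht₁0 : 0 ≤ t₁ := ht₁S.1.1
    have hFt₁ : 0 ≤ F t₁ := ht₁S.2
    have hneg : ∀ t, 0 ≤ t → t < t₁ → F t < 0 := by
      intro t ht htlt
      by_contra hge
      push_neg at hge
      have : t ∈ S := ⟨⟨ht, htlt.le.trans ht₁S.1.2⟩, hge⟩
      exact absurd (csInf_le hSbdd this) (not_le.mpr htlt)
    have hGt₁ : G t₁ ≤ G 0 := by
      have hGanti : AntitoneOn G (Icc 0 t₁) := by
        apply antitoneOn_of_deriv_nonpos (convex_Icc _ _)
        · exact fun t ht => (hGd t ht.1).continuousAt.continuousWithinAt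
        · intro t ht; rw [interior_Icc] at ht
          exact (hGd t ht.1.le).differentiableWithinAt
        · intro t ht; rw [interior_Icc] at ht
          rw [hG' t ht.1.le]
          exact (hneg t ht.1.le ht.2).le
      exact hGanti ⟨le_rfl, ht₁0⟩ ⟨ht₁0, le_rfl⟩ ht₁0
    have hGt₁pos : 0 < G t₁ := hGpos t₁ ht₁0
    set L₁ : ℝ := Real.sqrt (2 * n * (γ - 1) * C * G t₁ ^ (1 - α) + M ^ 2) with hL₁def
    have hL₁2pos : 0 < 2 * n * (γ - 1) * C * G t₁ ^ (1 - α) + M ^ 2 := by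
      have := Real.rpow_pos_of_pos hGt₁pos (1 - α)
      positivity
    have hL₁pos : 0 < L₁ := Real.sqrt_pos.mpr hL₁2pos
    have harct₁ : 0 ≤ Real.arctan (F t₁ / L₁) := by
      have h1 : (0:ℝ) ≤ F t₁ / L₁ := div_nonneg hFt₁ hL₁pos.le
      have := Real.arctan_strictMono.monotone h1
      rwa [Real.arctan_zero] at this
    have hLsq : L ^ 2 = 2 * n * (γ - 1) * C * G 0 ^ (1 - α) + M ^ 2 := by
      rw [hL, Real.sq_sqrt hL2pos.le]
    have hL₁sq : L₁ ^ 2 = 2 * n * (γ - 1) * C * G t₁ ^ (1 - α) + M ^ 2 :=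
      Real.sq_sqrt hL₁2pos.le
    have hsplit : ∀ x : ℝ, 0 < x → x ^ (1 - α) * x ^ α = x := by
      intro x hx
      rw [← Real.rpow_add hx]
      norm_num
    have e0 := hsplit (G 0) hG0
    have e1 := hsplit (G t₁) hGt₁pos
    have hαmono : G t₁ ^ α ≤ G 0 ^ α := Real.rpow_le_rpow hGt₁pos.le hGt₁ hα0.le
    have h1pos : 0 < G t₁ ^ (1 - α) := Real.rpow_pos_of_pos hGt₁pos _
    have h0pos : 0 < G 0 ^ (1 - α) := Real.rpow_pos_of_pos hG0 _
    have key1 : (2 * n * (γ - 1) * C * G 0 ^ (1 - α)) * G t₁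
        ≤ (2 * n * (γ - 1) * C * G t₁ ^ (1 - α)) * G 0 := by
      have h2 : (2 * (n:ℝ) * (γ - 1) * C * G 0 ^ (1 - α)) * G t₁
          = (2 * n * (γ - 1) * C) * (G 0 ^ (1 - α) * G t₁ ^ (1 - α)) * G t₁ ^ α := by
        linear_combination (2 * (n:ℝ) * (γ - 1) * C * G 0 ^ (1 - α)) * e1.symm
      have h3 : (2 * (n:ℝ) * (γ - 1) * C * G t₁ ^ (1 - α)) * G 0
          = (2 * n * (γ - 1) * C) * (G 0 ^ (1 - α) * G t₁ ^ (1 - α)) * G 0 ^ α := by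
        linear_combination (2 * (n:ℝ) * (γ - 1) * C * G t₁ ^ (1 - α)) * e0.symm
      rw [h2, h3]
      exact mul_le_mul_of_nonneg_left hαmono (by positivity)
    have key2 : M ^ 2 * G t₁ ≤ M ^ 2 * G 0 :=
      mul_le_mul_of_nonneg_left hGt₁ (sq_nonneg M)
    have hcore : L ^ 2 * G t₁ ≤ L₁ ^ 2 * G 0 := by
      rw [hLsq, hL₁sq]
      nlinarith [key1, key2]
    have hsqG0 : 0 < Real.sqrt (E₀ * G 0) := Real.sqrt_pos.mpr (by positivity)
    have hsqGt₁ : 0 < Real.sqrt (E₀ * G t₁) := Real.sqrt_pos.mpr (by positivity)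
    have hsqrt : L / (2 * Real.sqrt (E₀ * G 0)) ≤ L₁ / (2 * Real.sqrt (E₀ * G t₁)) := by
      rw [div_le_div_iff₀ (by positivity) (by positivity)]
      have h1 : Real.sqrt (L ^ 2 * (E₀ * G t₁)) ≤ Real.sqrt (L₁ ^ 2 * (E₀ * G 0)) := by
        apply Real.sqrt_le_sqrt
        nlinarith [mul_le_mul_of_nonneg_left hcore hE₀.le]
      rw [Real.sqrt_mul (sq_nonneg L), Real.sqrt_mul (sq_nonneg L₁),
        Real.sqrt_sq hLpos.le, Real.sqrt_sq hL₁pos.le] at h1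
      linarith
    apply aux_blowup n hn γ hγ1 hγ2 E₀ C M hE₀ hC hM G F Ep hGd hG' hGpos hFd hF' hEp hF2
      t₁ ht₁0 hFt₁ L₁ hL₁def
    linarith
end

section
/- For all real numbers z > 0 and z₁ ≥ 1, one has arctan(1/z) > 1/√(z² + z₁²). -/
theorem stmt_9 (z z₁ : ℝ) (hz : 0 < z) (hz₁ : 1 ≤ z₁) :
    Real.arctan (1 / z) > 1 / Real.sqrt (z ^ 2 + z₁ ^ 2) := by
  have hx : 0 < 1 / z := by positivity
  have h1 : Real.sin (Real.arctan (1/z)) < Real.arctan (1/z) :=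
    Real.sin_lt (by rw [← Real.arctan_zero]; exact Real.arctan_strictMono hx)
  have h2 : Real.sin (Real.arctan (1/z)) = 1 / Real.sqrt (z^2 + 1) := by
    rw [Real.sin_arctan]
    have h3 : Real.sqrt (1 + (1/z)^2) = Real.sqrt (z^2 + 1) / z := by
      rw [eq_div_iff hz.ne', ← Real.sqrt_sq hz.le, ← Real.sqrt_mul (by positivity)]
      congr 1
      field_simp
      rw [Real.sq_sqrt (by positivity)]
    rw [h3]
    field_simp
  have h4 : 1 / Real.sqrt (z^2 + z₁^2) ≤ 1 / Real.sqrt (z^2 + 1) := by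
    apply one_div_le_one_div_of_le (by positivity)
    apply Real.sqrt_le_sqrt
    nlinarith
  calc 1 / Real.sqrt (z^2 + z₁^2) ≤ 1 / Real.sqrt (z^2 + 1) := h4
    _ < Real.arctan (1/z) := h2 ▸ h1
end

section
/- Let A > 0, let β ≤ 1 be a real number, and let M ≠ 0 be a real number. There is no differentiable function F : [0,∞) → ℝ such that F'(t) ≥ (F(t)² + M²)/(A(1+t)^β) for all t ≥ 0. -/
theorem stmt_15 (A β M : ℝ) (hA : 0 < A) (hβ : β ≤ 1) (hM : M ≠ 0) :
    ¬ ∃ F : ℝ → ℝ,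
      (∀ t ≥ (0:ℝ), DifferentiableAt ℝ F t) ∧
      (∀ t ≥ (0:ℝ), deriv F t ≥ (F t ^ 2 + M ^ 2) / (A * (1 + t) ^ β)) := by
  rintro ⟨F, hdiff, hineq⟩
  have hc0 : (0:ℝ) < |M| := abs_pos.mpr hM
  set c := |M| with hcdef
  set G : ℝ → ℝ := fun t => Real.arctan (F t / c) - (c / A) * Real.log (1 + t) with hGdef
  have key : ∀ t : ℝ, 0 ≤ t →
      HasDerivAt G (1 / (1 + (F t / c) ^ 2) * (deriv F t / c) - (c / A) * ((1 + t)⁻¹ * 1)) t := by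
    intro t ht
    have h1t : (0:ℝ) < 1 + t := by linarith
    have hF : HasDerivAt (fun s => F s / c) (deriv F t / c) t :=
      ((hdiff t ht).hasDerivAt).div_const c
    have h1 : HasDerivAt (fun s => Real.arctan (F s / c))
        (1 / (1 + (F t / c) ^ 2) * (deriv F t / c)) t :=
      by have := (Real.hasDerivAt_arctan (F t / c)).comp t hF; exact this
    have h2 : HasDerivAt (fun s => (c / A) * Real.log (1 + s))
        ((c / A) * ((1 + t)⁻¹ * 1)) t :=
      (((Real.hasDerivAt_log h1t.ne').comp t ((hasDerivAt_id t).const_add 1))).const_mul (c / A)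
    exact h1.sub h2
  have hmono : MonotoneOn G (Set.Ici (0:ℝ)) := by
    apply monotoneOn_of_deriv_nonneg (convex_Ici 0)
    · intro t ht
      exact ((key t ht).differentiableAt).continuousAt.continuousWithinAt
    · intro t ht
      rw [interior_Ici] at ht
      exact ((key t (le_of_lt ht)).differentiableAt).differentiableWithinAt
    · intro t ht
      rw [interior_Ici] at ht
      have ht0 : (0:ℝ) ≤ t := le_of_lt ht
      rw [(key t ht0).deriv]
      have h1t : (0:ℝ) < 1 + t := by linarith
      have hb : (1 + t) ^ β ≤ 1 + t := by
        calc (1+t) ^ β ≤ (1+t) ^ (1:ℝ) :=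
              Real.rpow_le_rpow_of_exponent_le (by linarith) hβ
        _ = 1 + t := Real.rpow_one _
      have hbpos : (0:ℝ) < (1 + t) ^ β := Real.rpow_pos_of_pos h1t β
      have hF' : deriv F t ≥ (F t ^ 2 + c ^ 2) / (A * (1 + t)) := by
        have h := hineq t ht0
        have hMc : M ^ 2 = c ^ 2 := (sq_abs M).symm
        rw [hMc] at h
        refine le_trans ?_ h
        gcongr
      have hden : (0:ℝ) < c ^ 2 + F t ^ 2 := by positivity
      have e1 : 1 / (1 + (F t / c) ^ 2) * (deriv F t / c)
          = c * deriv F t / (c ^ 2 + F t ^ 2) := by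
        field_simp
      rw [e1]
      have hstep : c / (A * (1 + t)) ≤ c * deriv F t / (c ^ 2 + F t ^ 2) := by
        rw [div_le_div_iff₀ (by positivity) hden]
        have h1 := mul_le_mul_of_nonneg_left hF' (le_of_lt hc0)
        calc c * (c ^ 2 + F t ^ 2)
            = c * ((F t ^ 2 + c ^ 2) / (A * (1 + t))) * (A * (1 + t)) := by
              field_simp
              ring
        _ ≤ c * deriv F t * (A * (1 + t)) := by
              apply mul_le_mul_of_nonneg_right h1 (by positivity)
      have h2 : (c / A) * ((1 + t)⁻¹ * 1) = c / (A * (1 + t)) := by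
        field_simp
      rw [h2]
      linarith
  set T := Real.exp (A / c * Real.pi) with hTdef
  have hT1 : (1:ℝ) ≤ T := Real.one_le_exp (by positivity)
  have hT0 : (0:ℝ) ≤ T := by linarith
  have hGT := hmono (Set.mem_Ici.mpr le_rfl) (Set.mem_Ici.mpr hT0) hT0
  have hG0 : G 0 = Real.arctan (F 0 / c) := by
    simp [hGdef]
  have hlogT : A / c * Real.pi ≤ Real.log (1 + T) := by
    calc A / c * Real.pi = Real.log T := (Real.log_exp _).symm
    _ ≤ Real.log (1 + T) := Real.log_le_log (Real.exp_pos _) (by linarith)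
  have hpi : Real.pi ≤ (c / A) * Real.log (1 + T) := by
    have h := mul_le_mul_of_nonneg_left hlogT (le_of_lt (div_pos hc0 hA))
    calc Real.pi = c / A * (A / c * Real.pi) := by field_simp
    _ ≤ c / A * Real.log (1 + T) := h
  have h1 : Real.arctan (F T / c) < Real.pi / 2 := Real.arctan_lt_pi_div_two _
  have h2 : -(Real.pi / 2) < Real.arctan (F 0 / c) := Real.neg_pi_div_two_lt_arctan _
  have hfin : Real.arctan (F 0 / c) ≤ Real.arctan (F T / c) - (c / A) * Real.log (1 + T) := by
    rw [← hG0]; exact hGT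
  linarith [Real.pi_pos]
end

section
/- Let A > 0 and let β > 1 be a real number. There is no differentiable function F : [0,∞) → ℝ such that F(0) > (β−1)A and F'(t) ≥ F(t)² / (A(1+t)^β) for all t ≥ 0. -/
open Real Set Filter

theorem stmt_16 (A β : ℝ) (hA : 0 < A) (hβ : 1 < β) :
    ¬ ∃ F : ℝ → ℝ,
      (∀ t ≥ (0:ℝ), DifferentiableAt ℝ F t) ∧
      F 0 > (β - 1) * A ∧
      (∀ t ≥ (0:ℝ), deriv F t ≥ F t ^ 2 / (A * (1 + t) ^ β)) := by
  rintro ⟨F, hdiff, h0, hineq⟩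
  have hβ1 : 0 < β - 1 := by linarith
  have hF0 : 0 < F 0 := lt_trans (by positivity) h0
  -- F is monotone on [0, ∞)
  have hmono : MonotoneOn F (Ici 0) := by
    apply monotoneOn_of_deriv_nonneg (convex_Ici 0)
    · exact fun t ht => (hdiff t ht).continuousAt.continuousWithinAt
    · intro t ht
      rw [interior_Ici] at ht
      exact (hdiff t ht.le).differentiableWithinAt
    · intro t ht
      rw [interior_Ici] at ht
      have h1t : (0:ℝ) < 1 + t := by have := ht.out; linarith
      have hden : 0 < A * (1 + t) ^ β := mul_pos hA (Real.rpow_pos_of_pos h1t β)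
      exact (div_nonneg (sq_nonneg (F t)) hden.le).trans (hineq t ht.out.le)
  have hFpos : ∀ t ≥ (0:ℝ), 0 < F t :=
    fun t ht => lt_of_lt_of_le hF0 (hmono self_mem_Ici ht ht)
  set c := A * (β - 1) with hc
  have hcpos : 0 < c := mul_pos hA hβ1
  set φ : ℝ → ℝ := fun s => -(F s)⁻¹ + ((1 + s) ^ (1 - β)) / c with hφ
  have hφderiv : ∀ t ≥ (0:ℝ), HasDerivAt φ
      (deriv F t / F t ^ 2 + (1 * (1 - β) * (1 + t) ^ (1 - β - 1)) / c) t := by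
    intro t ht
    have h1t : (0:ℝ) < 1 + t := by linarith
    have hFd := (hdiff t ht).hasDerivAt
    have hinv : HasDerivAt (fun s => -(F s)⁻¹) (deriv F t / F t ^ 2) t := by
      have h := (hFd.inv (hFpos t ht).ne').neg
      convert h using 1
      · rfl
      · rfl
      · rfl
      · ring
    have hid : HasDerivAt (fun s : ℝ => 1 + s) 1 t := by
      simpa using (hasDerivAt_id t).const_add (1:ℝ)
    have hrp : HasDerivAt (fun s : ℝ => (1 + s) ^ (1 - β))
        (1 * (1 - β) * (1 + t) ^ (1 - β - 1)) t :=
      hid.rpow_const (Or.inl h1t.ne')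
    exact hinv.add (hrp.div_const c)
  have hφmono : MonotoneOn φ (Ici 0) := by
    apply monotoneOn_of_deriv_nonneg (convex_Ici 0)
    · exact fun t ht => (hφderiv t ht).continuousAt.continuousWithinAt
    · intro t ht
      rw [interior_Ici] at ht
      exact (hφderiv t ht.le).differentiableAt.differentiableWithinAt
    · intro t ht
      rw [interior_Ici] at ht
      have ht' : (0:ℝ) ≤ t := ht.out.le
      rw [(hφderiv t ht').deriv]
      have h1t : (0:ℝ) < 1 + t := by linarith
      have hFt := hFpos t ht'
      have hrpos : 0 < (1 + t) ^ β := Real.rpow_pos_of_pos h1t β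
      have hneg : (1:ℝ) * (1 - β) * (1 + t) ^ (1 - β - 1) / c = -(1 / (A * (1 + t) ^ β)) := by
        have he : (1:ℝ) - β - 1 = -β := by ring
        rw [he, Real.rpow_neg h1t.le, hc]
        field_simp
        ring
      rw [hneg]
      have h2 : F t ^ 2 / (A * (1 + t) ^ β) / F t ^ 2 = 1 / (A * (1 + t) ^ β) := by
        field_simp
      have h3 : F t ^ 2 / (A * (1 + t) ^ β) / F t ^ 2 ≤ deriv F t / F t ^ 2 := by
        gcongr
        exact hineq t ht'
      rw [h2] at h3
      linarith
  -- lower bound for (1+t)^(1-β)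
  set ε : ℝ := c * (1 / c - (F 0)⁻¹) with hε
  have hεpos : 0 < ε := by
    have hcF : c < F 0 := by rw [hc]; linarith [h0]
    have h4 : (F 0)⁻¹ < 1 / c := by
      rw [one_div]
      exact inv_strictAnti₀ hcpos hcF
    have h5 : 0 < 1 / c - (F 0)⁻¹ := by linarith
    exact mul_pos hcpos h5
  have hbound : ∀ t ≥ (0:ℝ), ε < (1 + t) ^ (1 - β) := by
    intro t ht
    have h1 := hφmono self_mem_Ici ht ht
    have hφ0 : φ 0 = -(F 0)⁻¹ + 1 / c := by
      simp [hφ, Real.one_rpow]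
    have hFt := hFpos t ht
    have hinvpos : 0 < (F t)⁻¹ := inv_pos.mpr hFt
    rw [hφ0] at h1
    have h2 : 1 / c - (F 0)⁻¹ < (1 + t) ^ (1 - β) / c := by
      simp only [hφ] at h1
      linarith
    calc ε = c * (1 / c - (F 0)⁻¹) := rfl
      _ < c * ((1 + t) ^ (1 - β) / c) := mul_lt_mul_of_pos_left h2 hcpos
      _ = (1 + t) ^ (1 - β) := by field_simp
  -- contradiction with decay at infinity
  have htend : Tendsto (fun t : ℝ => (1 + t) ^ (1 - β)) atTop (nhds 0) := by
    have h1 : Tendsto (fun t : ℝ => 1 + t) atTop atTop :=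
      tendsto_atTop_add_const_left atTop 1 tendsto_id
    have h2 : Tendsto (fun x : ℝ => x ^ (-(β - 1))) atTop (nhds 0) :=
      tendsto_rpow_neg_atTop hβ1
    have h3 := h2.comp h1
    simpa [Function.comp_def, neg_sub] using h3
  have hev : ∀ᶠ t : ℝ in atTop, (1 + t) ^ (1 - β) < ε :=
    htend.eventually_lt_const hεpos
  obtain ⟨t, hlt, ht0⟩ := (hev.and (eventually_ge_atTop (0:ℝ))).exists
  exact absurd (hbound t ht0) (not_lt.mpr hlt.le)
end

section
/- Let A > 0, let β > 1 be a real number, and let M > 0. There is no differentiable function F : [0,∞) → ℝ such that arctan(F(0)/M) + M/(A(β−1)) > π/2 and F'(t) ≥ (F(t)² + M²)/(A(1+t)^β) for all t ≥ 0. -/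
theorem stmt_17 (A β M : ℝ) (hA : 0 < A) (hβ : 1 < β) (hM : 0 < M) :
    ¬ ∃ F : ℝ → ℝ,
      Real.arctan (F 0 / M) + M / (A * (β - 1)) > Real.pi / 2 ∧
      (∀ t ≥ (0:ℝ), DifferentiableAt ℝ F t) ∧
      (∀ t ≥ (0:ℝ), deriv F t ≥ (F t ^ 2 + M ^ 2) / (A * (1 + t) ^ β)) := by
  rintro ⟨F, hinit, hdiff, hode⟩
  set c : ℝ := M / (A * (β - 1)) with hc
  have hβ1 : 0 < β - 1 := by linarith
  have hcpos : 0 < c := div_pos hM (mul_pos hA hβ1)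
  set g : ℝ → ℝ := fun t => Real.arctan (F t / M) + c * (1 + t) ^ (1 - β) with hg
  -- derivative facts
  have hgderiv : ∀ t ≥ (0:ℝ), HasDerivAt g
      ((1 + (F t / M) ^ 2)⁻¹ * (deriv F t / M) + c * ((1 - β) * (1 + t) ^ (1 - β - 1) * 1)) t := by
    intro t ht
    have h1 : HasDerivAt F (deriv F t) t := (hdiff t ht).hasDerivAt
    have h2 : HasDerivAt (fun t => F t / M) (deriv F t / M) t := h1.div_const M
    have h3 : HasDerivAt (fun t => Real.arctan (F t / M))
        ((1 + (F t / M) ^ 2)⁻¹ * (deriv F t / M)) t := by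
      have := (Real.hasDerivAt_arctan (F t / M)).comp t h2
      rw [one_div] at this; exact this
    have hpos : (0:ℝ) < 1 + t := by linarith
    have h4 : HasDerivAt (fun t : ℝ => (1 + t) ^ (1 - β))
        ((1 - β) * (1 + t) ^ (1 - β - 1) * 1) t := by
      have hb : HasDerivAt (fun t : ℝ => 1 + t) 1 t := by
        simpa using (hasDerivAt_id t).const_add (1 : ℝ)
      exact (Real.hasDerivAt_rpow_const (Or.inl (ne_of_gt hpos))).comp t hb
    exact h3.add (h4.const_mul c)
  have hgmono : MonotoneOn g (Set.Ici (0:ℝ)) := by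
    apply monotoneOn_of_deriv_nonneg (convex_Ici 0)
    · exact fun t ht => ((hgderiv t ht).differentiableAt.continuousAt).continuousWithinAt
    · intro t ht
      rw [interior_Ici] at ht
      exact (hgderiv t (le_of_lt ht)).differentiableAt.differentiableWithinAt
    · intro t ht
      rw [interior_Ici] at ht
      have ht0 : (0:ℝ) ≤ t := le_of_lt ht
      rw [(hgderiv t ht0).deriv]
      have hpos : (0:ℝ) < 1 + t := by linarith
      have hrp : (0:ℝ) < (1 + t) ^ β := Real.rpow_pos_of_pos hpos β
      have hFM : (0:ℝ) < F t ^ 2 + M ^ 2 := by positivity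
      have hkey : (1 + (F t / M) ^ 2)⁻¹ * (deriv F t / M)
          = M * deriv F t / (F t ^ 2 + M ^ 2) := by
        field_simp
        ring
      rw [hkey]
      have hode' := hode t ht0
      have h5 : M * deriv F t / (F t ^ 2 + M ^ 2) ≥ M / (A * (1 + t) ^ β) := by
        rw [ge_iff_le, div_le_div_iff₀ (by positivity) hFM]
        have : (F t ^ 2 + M ^ 2) / (A * (1 + t) ^ β) * M ≤ deriv F t * M :=
          mul_le_mul_of_nonneg_right hode' (le_of_lt hM)
        calc M * (F t ^ 2 + M ^ 2) = (F t ^ 2 + M ^ 2) / (A * (1 + t) ^ β) * M * (A * (1 + t) ^ β) := by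
              field_simp
          _ ≤ deriv F t * M * (A * (1 + t) ^ β) := by
              apply mul_le_mul_of_nonneg_right this (by positivity)
          _ = M * deriv F t * (A * (1 + t) ^ β) := by ring
      have h6 : c * ((1 - β) * (1 + t) ^ (1 - β - 1) * 1) = - (M / (A * (1 + t) ^ β)) := by
        have : (1 + t) ^ (1 - β - 1) = ((1 + t) ^ β)⁻¹ * (1 + t) ^ (0:ℝ) := by
          rw [← Real.rpow_neg (le_of_lt hpos), ← Real.rpow_add hpos]
          ring_nf
        rw [this, Real.rpow_zero]
        rw [hc]
        field_simp
        ring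
      rw [h6]
      linarith
  -- tail estimate
  have ε := Real.arctan (F 0 / M) + c - Real.pi / 2
  have hε : 0 < Real.arctan (F 0 / M) + c - Real.pi / 2 := by
    rw [hc]; linarith [hinit]
  set ε : ℝ := Real.arctan (F 0 / M) + c - Real.pi / 2 with hεdef
  have htend : Filter.Tendsto (fun t : ℝ => c * (1 + t) ^ (1 - β)) Filter.atTop (nhds 0) := by
    have h0 : Filter.Tendsto (fun x : ℝ => x ^ (-(β - 1))) Filter.atTop (nhds 0) :=
      tendsto_rpow_neg_atTop hβ1
    have h1 : Filter.Tendsto (fun t : ℝ => 1 + t) Filter.atTop Filter.atTop :=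
      Filter.tendsto_atTop_add_const_left _ 1 Filter.tendsto_id
    have := (h0.comp h1).const_mul c
    simpa [Function.comp, neg_sub, mul_zero] using this
  have hev : ∀ᶠ t in Filter.atTop, c * (1 + t) ^ (1 - β) < ε :=
    htend.eventually_lt_const hε
  obtain ⟨t, ht1, ht0⟩ := (hev.and (Filter.eventually_ge_atTop (0:ℝ))).exists
  have hmono := hgmono (Set.self_mem_Ici) (Set.mem_Ici.mpr ht0) ht0
  have hg0 : g 0 = Real.arctan (F 0 / M) + c := by
    simp [hg, Real.rpow_natCast]
  have hlt : Real.arctan (F t / M) < Real.pi / 2 := Real.arctan_lt_pi_div_two _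
  have hge : Real.arctan (F t / M) + c * (1 + t) ^ (1 - β) ≥ Real.arctan (F 0 / M) + c := by
    rw [← hg0]; exact hmono
  rw [hεdef] at ht1
  linarith
end

section
/- Let l ≠ 0 be a real number and let E ≥ 0 and Θ ≥ 0 be constants. Let G : [0,∞) → ℝ be twice differentiable with G(t) ≥ 0, G''(t) + l² G(t) ≤ Θ, and (G'(t))² ≤ 4 E G(t) for all t ≥ 0, and suppose G(0) ≤ (Θ + √(2EΘ))/l². Then G(t) ≤ (√Θ + √(2E))² / l² for all t ≥ 0. -/
set_option maxHeartbeats 1600000 in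
theorem stmt_18 (l E Θ : ℝ) (hl : l ≠ 0) (hE : 0 ≤ E) (hΘ : 0 ≤ Θ)
    (G : ℝ → ℝ)
    (hd1 : ∀ t ≥ (0:ℝ), DifferentiableAt ℝ G t)
    (hd2 : ∀ t ≥ (0:ℝ), DifferentiableAt ℝ (deriv G) t)
    (hGnn : ∀ t ≥ (0:ℝ), 0 ≤ G t)
    (hG'' : ∀ t ≥ (0:ℝ), deriv (deriv G) t + l ^ 2 * G t ≤ Θ)
    (hG' : ∀ t ≥ (0:ℝ), (deriv G t) ^ 2 ≤ 4 * E * G t)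
    (hG0 : G 0 ≤ (Θ + Real.sqrt (2 * E * Θ)) / l ^ 2) :
    ∀ t ≥ (0:ℝ), G t ≤ (Real.sqrt Θ + Real.sqrt (2 * E)) ^ 2 / l ^ 2 := by
  have hl2 : (0:ℝ) < l ^ 2 := by positivity
  set a := Real.sqrt Θ with hadef
  set b := Real.sqrt (2*E) with hbdef
  have ha : 0 ≤ a := Real.sqrt_nonneg _
  have hb : 0 ≤ b := Real.sqrt_nonneg _
  have ha2 : a ^ 2 = Θ := Real.sq_sqrt hΘ
  have hb2 : b ^ 2 = 2 * E := Real.sq_sqrt (by linarith)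
  have hδeq : Real.sqrt (2 * E * Θ) = b * a := by
    rw [Real.sqrt_mul (by linarith)]
  set δ := b * a with hδdef
  have hδ0 : 0 ≤ δ := mul_nonneg hb ha
  clear_value a b δ
  set c := (Θ + δ) / l ^ 2 with hcdef
  set Gp := (a + b) ^ 2 / l ^ 2 with hGpdef
  rw [hδeq] at hG0
  have hcl : c * l ^ 2 = a ^ 2 + b * a := by
    rw [hcdef]; field_simp; linarith [ha2]
  have hGpl : Gp * l ^ 2 = (a + b) ^ 2 := by
    rw [hGpdef]; field_simp
  have hcGp : c ≤ Gp := by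
    rw [hcdef, hGpdef]
    gcongr
    nlinarith
  rw [← hcdef] at hG0
  clear_value c Gp
  intro t₁ ht₁
  by_contra hcon
  push_neg at hcon
  -- the set of times in [0, t₁] where G ≤ c
  set S : Set ℝ := {s : ℝ | s ∈ Set.Icc (0:ℝ) t₁ ∧ G s ≤ c} with hSdef
  have hS0 : (0:ℝ) ∈ S := ⟨⟨le_refl 0, ht₁⟩, hG0⟩
  have hSne : S.Nonempty := ⟨0, hS0⟩
  have hbdd : BddAbove S := ⟨t₁, fun x hx => hx.1.2⟩
  set t₀ := sSup S with ht₀def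
  have h0t : 0 ≤ t₀ := le_csSup hbdd hS0
  have htt₁ : t₀ ≤ t₁ := csSup_le hSne (fun x hx => hx.1.2)
  have hclosure : t₀ ∈ closure S := (isLUB_csSup hSne hbdd).mem_closure hSne
  have hGt₀ : G t₀ ≤ c := by
    by_contra h
    push_neg at h
    have hcont : ContinuousAt G t₀ := (hd1 t₀ h0t).continuousAt
    have hU : G ⁻¹' Set.Ioi c ∈ nhds t₀ := hcont.preimage_mem_nhds (Ioi_mem_nhds h)
    obtain ⟨x, hx1, hx2⟩ := mem_closure_iff_nhds.mp hclosure _ hU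
    exact absurd hx2.2 (not_le.mpr hx1)
  have hmid : ∀ t, t₀ < t → t ≤ t₁ → c < G t := by
    intro t h1 h2
    by_contra h
    push_neg at h
    have : t ∈ S := ⟨⟨by linarith, h2⟩, h⟩
    linarith [le_csSup hbdd this]
  have htlt : t₀ < t₁ := by
    rcases lt_or_eq_of_le htt₁ with h | h
    · exact h
    · rw [h] at hGt₀; linarith
  have hdG' := hG' t₀ h0t
  clear_value S t₀
  -- set up the comparison functions
  set d := deriv G t₀ with hddef
  set ψ' : ℝ → ℝ := fun t => deriv G t - d + δ * (t - t₀) with hψ'def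
  set ψ : ℝ → ℝ := fun t => G t - d * (t - t₀) + δ * (t - t₀) ^ 2 / 2 with hψdef
  have hψderiv : ∀ t ≥ (0:ℝ), HasDerivAt ψ (ψ' t) t := by
    intro t ht
    have h1 := (hd1 t ht).hasDerivAt
    have hp : HasDerivAt (fun t => d * (t - t₀)) d t := by
      simpa using ((hasDerivAt_id t).sub_const t₀).const_mul d
    have hq : HasDerivAt (fun t => δ * (t - t₀) ^ 2 / 2) (δ * (t - t₀)) t := by
      have h2 := (((hasDerivAt_id t).sub_const t₀).pow 2).const_mul δ |>.div_const 2
      apply h2.congr_deriv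
      simp only [id_eq]
      ring
    exact (h1.sub hp).add hq
  have hψ'deriv : ∀ t ≥ (0:ℝ), HasDerivAt ψ' (deriv (deriv G) t + δ) t := by
    intro t ht
    have h1 := (hd2 t ht).hasDerivAt
    have hq : HasDerivAt (fun t => δ * (t - t₀)) δ t := by
      simpa using ((hasDerivAt_id t).sub_const t₀).const_mul δ
    exact (h1.sub_const d).add hq
  -- ψ' is antitone on [t₀, t₁]
  have hψ'anti : AntitoneOn ψ' (Set.Icc t₀ t₁) := by
    apply antitoneOn_of_deriv_nonpos (convex_Icc _ _)
    · intro t ht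
      exact ((hψ'deriv t (le_trans h0t ht.1)).continuousAt).continuousWithinAt
    · intro t ht
      rw [interior_Icc] at ht
      exact ((hψ'deriv t (le_trans h0t (le_of_lt ht.1))).differentiableAt).differentiableWithinAt
    · intro t ht
      rw [interior_Icc] at ht
      have ht0 : (0:ℝ) ≤ t := le_trans h0t (le_of_lt ht.1)
      rw [(hψ'deriv t ht0).deriv]
      have h1 := hG'' t ht0
      have h2 := hmid t ht.1 (le_of_lt ht.2)
      have h3 : c * l ^ 2 < G t * l ^ 2 := by
        exact mul_lt_mul_of_pos_right h2 hl2
      nlinarith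
  have hψ'le : ∀ t ∈ Set.Icc t₀ t₁, ψ' t ≤ 0 := by
    intro t ht
    have h1 := hψ'anti (Set.left_mem_Icc.mpr (le_of_lt htlt)) ht ht.1
    have h2 : ψ' t₀ = 0 := by simp [hψ'def, hddef]
    linarith
  -- ψ is antitone on [t₀, t₁]
  have hψanti : AntitoneOn ψ (Set.Icc t₀ t₁) := by
    apply antitoneOn_of_deriv_nonpos (convex_Icc _ _)
    · intro t ht
      exact ((hψderiv t (le_trans h0t ht.1)).continuousAt).continuousWithinAt
    · intro t ht
      rw [interior_Icc] at ht
      exact ((hψderiv t (le_trans h0t (le_of_lt ht.1))).differentiableAt).differentiableWithinAt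
    · intro t ht
      rw [interior_Icc] at ht
      rw [(hψderiv t (le_trans h0t (le_of_lt ht.1))).deriv]
      exact hψ'le t ⟨le_of_lt ht.1, le_of_lt ht.2⟩
  have hψfin := hψanti (Set.left_mem_Icc.mpr (le_of_lt htlt))
    (Set.right_mem_Icc.mpr (le_of_lt htlt)) (le_of_lt htlt)
  have hψt₀ : ψ t₀ = G t₀ := by simp [hψdef]
  have hψt₁ : ψ t₁ = G t₁ - d * (t₁ - t₀) + δ * (t₁ - t₀) ^ 2 / 2 := by rw [hψdef]
  clear_value ψ ψ' d
  set s := t₁ - t₀ with hsdef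
  have hs : 0 < s := by simp [hsdef]; linarith
  clear_value s
  have hψineq : G t₁ ≤ G t₀ + d * s - δ * s ^ 2 / 2 := by
    rw [hψt₀, hψt₁] at hψfin
    linarith
  have hdsq : d ^ 2 ≤ 2 * b ^ 2 * c := by
    have h2 : 4 * E * G t₀ ≤ 4 * E * c :=
      mul_le_mul_of_nonneg_left hGt₀ (by linarith)
    have h3 : 2 * b ^ 2 * c = 4 * E * c := by rw [hb2]; ring
    linarith
  clear hψanti hψfin hψt₀ hψt₁ hψderiv hψ'deriv hψ'anti hψ'le hψdef hψ'def
  clear hSdef hS0 hSne hbdd ht₀def hclosure hmid hd1 hd2 hG'' hG' hG0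
  clear hδeq hadef hbdef hcdef hGpdef hddef htlt htt₁ ht₁ hsdef
  clear ψ ψ' S
  rcases le_or_gt d 0 with hd | hd
  · -- d ≤ 0 : then G t₁ ≤ c ≤ Gp, contradiction
    have h1 : d * s ≤ 0 := mul_nonpos_of_nonpos_of_nonneg hd (le_of_lt hs)
    have h2 : 0 ≤ δ * s ^ 2 / 2 := by positivity
    linarith
  · -- d > 0
    have hbpos : 0 < b := by
      rcases lt_or_eq_of_le hb with h | h
      · exact h
      · exfalso
        have hb0 : b = 0 := h.symm
        rw [hb0] at hb2
        have hE0 : E = 0 := by linarith [hb2]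
        rw [hE0] at hdG'
        nlinarith [mul_pos hd hd, hdG']
    have hcpos : 0 < c := by
      nlinarith [hdsq, mul_pos hd hd, sq_nonneg b]
    have hapos : 0 < a := by
      rcases lt_or_eq_of_le ha with h | h
      · exact h
      · exfalso
        have hc0 : c * l ^ 2 = 0 := by rw [hcl, ← h]; ring
        nlinarith [mul_pos hcpos hl2]
    have hδpos : 0 < δ := by rw [hδdef]; exact mul_pos hbpos hapos
    -- 2δ G t₁ ≤ 2δ c + d²
    have hA : δ * G t₁ ≤ δ * (G t₀ + d * s - δ * s ^ 2 / 2) :=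
      mul_le_mul_of_nonneg_left hψineq hδ0
    have hB : δ * G t₀ ≤ δ * c := mul_le_mul_of_nonneg_left hGt₀ hδ0
    have h1 : 2 * δ * G t₁ ≤ 2 * δ * c + d ^ 2 := by
      nlinarith [sq_nonneg (d - δ * s), hA, hB]
    rw [hδdef] at h1
    -- divide by 2b : a G t₁ ≤ a c + b c
    have h4 : 2 * b * (a * G t₁) ≤ 2 * b * (a * c + b * c) := by
      linarith [h1, hdsq]
    have h5 : a * G t₁ ≤ a * c + b * c :=
      le_of_mul_le_mul_left h4 (by linarith)
    -- multiply by l² and use c l² = a(a+b), Gp l² = (a+b)²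
    have h6 : a * G t₁ * l ^ 2 ≤ (a * c + b * c) * l ^ 2 :=
      mul_le_mul_of_nonneg_right h5 (le_of_lt hl2)
    have h7 : (a * c + b * c) * l ^ 2 = a * ((a + b) ^ 2) := by
      linear_combination (a + b) * hcl
    have h8 : (a * l ^ 2) * G t₁ ≤ (a * l ^ 2) * Gp := by
      have := hGpl
      nlinarith [h6, h7]
    have hal : 0 < a * l ^ 2 := by positivity
    have h9 : G t₁ ≤ Gp := le_of_mul_le_mul_left h8 hal
    linarith
end
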